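/- arXiv:math/0608788 — 2 statements merged into one kernel-verified Lean document; each statement's English description precedes it below -/
import Mathlib

section
/- Let τ = z_r ⋯ z_s be a squarefree monomial in ℂⁿ with index set I = {r, …, s}. For a subset J ⊆ I let V_J = ∩_{i∈J}{z_i = 0}, and for a holomorphic k-form ω let ω_J denote the form obtained by pulling ω back to V_J and extending constantly to ℂⁿ (i.e. setting z_i = 0 and dz_i = 0 for i ∈ J in the coefficients). Define α¹ = α − α_I and recursively α^{i+1} = α^i − Σ_{|I∖J| = i, J ⊆ I} (α^i)_J. Then α = α_I + Σ_{|I∖J|=1} (α¹)_J + ⋯ + Σ_{|I∖J|=s−r} (α^{s−r})_J + α^{s−r+1}, where for each i and each J ⊆ I with |I∖J| = i, the form (α^i)_J vanishes on the divisor ∪_{l ∈ I∖J}{z_l = 0}, and α^{s−r+1} vanishes on {τ = 0} = ∪_{l∈I}{z_l = 0}. -/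
open Complex

abbrev Pt (n : ℕ) := Fin n → ℂ
abbrev Idx (n k : ℕ) := {s : Finset (Fin n) // s.card = k}
abbrev Form (n k : ℕ) := Idx n k → Pt n → ℂ

/-- A form is holomorphic on `Ω` if all its coefficient functions are. -/
def HoloOn {n k : ℕ} (Ω : Set (Pt n)) (α : Form n k) : Prop :=
  ∀ s, DifferentiableOn ℂ (α s) Ω

/-- Wedge product of a `1`-form with coefficients `ω` with a `k`-form `α`. -/
noncomputable def wedge1 {n k : ℕ} (ω : Fin n → Pt n → ℂ) (α : Form n k) : Form n (k + 1) :=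
  fun t z => ∑ j ∈ t.1.attach,
    (-1 : ℂ) ^ ((t.1.filter (fun i => i < j.1)).card) * ω j.1 z *
      α ⟨t.1.erase j.1, by rw [Finset.card_erase_of_mem j.2, t.2]; omega⟩ z

/-- Pullback of `α` to the coordinate subspace `{z_i = 0, i ∈ J}`, extended constantly:
substitute `z_i = 0` and `dz_i = 0` for `i ∈ J`. -/
noncomputable def restrictJ {n k : ℕ} (J : Finset (Fin n)) (α : Form n k) : Form n k :=
  fun s z => if Disjoint s.1 J then α s (fun i => if i ∈ J then 0 else z i) else 0

/-- The (iterated) wedge `(⋀_{j ∈ J} dz_j/z_j) ∧ α`. -/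
noncomputable def logWedge {n k r : ℕ} (J : Finset (Fin n)) (hJ : J.card = r) (α : Form n k) :
    Form n (k + r) :=
  fun t z =>
    if h : J ⊆ t.1 then
      (∏ j ∈ J, (z j)⁻¹) * α ⟨t.1 \ J, by rw [Finset.card_sdiff_of_subset h, t.2, hJ]; omega⟩ z
    else 0

/-- `β` admits a holomorphic extension across `bad` on `Ω`. -/
def ExtendsHolo {n k : ℕ} (Ω : Set (Pt n)) (β : Form n k) (bad : Set (Pt n)) : Prop :=
  ∃ γ : Form n k, HoloOn Ω γ ∧ ∀ s, ∀ z ∈ Ω \ bad, γ s z = β s z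

/-- Coefficients of the logarithmic differential `dσ/σ` of the monomial `z^a`. -/
noncomputable def logCoef {n : ℕ} (a : Fin n → ℕ) : Fin n → Pt n → ℂ :=
  fun j z => (a j : ℂ) / z j

/-- Coefficients of the exterior derivative `dσ` of the monomial `σ = z^a`. -/
noncomputable def dMono {n : ℕ} (a : Fin n → ℕ) : Fin n → Pt n → ℂ :=
  fun j z => (a j : ℂ) * ∏ i, z i ^ (if i = j then a i - 1 else a i)

/-- The recursively defined forms `α⁰ = α`, `αⁱ⁺¹ = αⁱ − Σ_{J ⊆ I, |I∖J| = i} (αⁱ)_J`. -/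
noncomputable def seqA {n k : ℕ} (I : Finset (Fin n)) (α : Form n k) : ℕ → Form n k
  | 0 => α
  | (i + 1) =>
      seqA I α i -
        ∑ J ∈ I.powerset.filter (fun J => (I \ J).card = i), restrictJ J (seqA I α i)

/-!
The decomposition of `α` telescopes. Restrictions compose, `(β_K)_J = β_{J ∪ K}`, so both
vanishing claims reduce to `(αⁱ)_J = 0` whenever `|I∖J| < i`: restricting `(αⁱ)_J` further to
`{z_l = 0}` with `l ∈ I∖J` gives `(αⁱ)_{J ∪ {l}}`, and `|I∖(J ∪ {l})| = i - 1`.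
-/

section

variable {n k : ℕ}

lemma restrictJ_restrictJ (J K : Finset (Fin n)) (β : Form n k) :
    restrictJ J (restrictJ K β) = restrictJ (J ∪ K) β := by
  funext s z
  simp only [restrictJ, Finset.disjoint_union_right]
  by_cases hJ : Disjoint s.1 J <;> by_cases hK : Disjoint s.1 K <;>
    simp only [hJ, hK, if_true, if_false, and_self, and_false, false_and]
  congr 1
  funext i
  by_cases hiK : i ∈ K <;> by_cases hiJ : i ∈ J <;> simp [hiK, hiJ]

lemma restrictJ_sub (J : Finset (Fin n)) (β γ : Form n k) :
    restrictJ J (β - γ) = restrictJ J β - restrictJ J γ := by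
  funext s z
  simp only [restrictJ, Pi.sub_apply]
  split_ifs <;> simp

lemma restrictJ_sum (J : Finset (Fin n)) {ι : Type*} (t : Finset ι) (f : ι → Form n k) :
    restrictJ J (∑ x ∈ t, f x) = ∑ x ∈ t, restrictJ J (f x) := by
  funext s z
  simp only [restrictJ, Finset.sum_apply]
  split_ifs <;> simp

lemma seqA_succ (I : Finset (Fin n)) (α : Form n k) (i : ℕ) :
    seqA I α (i + 1) = seqA I α i -
      ∑ J ∈ I.powerset.filter (fun J => (I \ J).card = i), restrictJ J (seqA I α i) :=
  rfl

lemma eq_sum_restrictJ_seqA_add_seqA (I : Finset (Fin n)) (α : Form n k) (m : ℕ) :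
    α = (∑ i ∈ Finset.range m, ∑ J ∈ I.powerset.filter (fun J => (I \ J).card = i),
        restrictJ J (seqA I α i)) + seqA I α m := by
  induction m with
  | zero => simp [seqA]
  | succ m ih =>
    rw [Finset.sum_range_succ, seqA_succ]
    conv_lhs => rw [ih]
    abel

end

lemma Finset.card_sdiff_union_lt_of_not_subset {α : Type*} [DecidableEq α] {I J K : Finset α}
    (hJ : J ⊆ I) (hJK : ¬ J ⊆ K) : (I \ (J ∪ K)).card < (I \ K).card := by
  obtain ⟨x, hxJ, hxK⟩ := Finset.not_subset.mp hJK
  refine Finset.card_lt_card ⟨Finset.sdiff_subset_sdiff le_rfl Finset.subset_union_right,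
    fun h => ?_⟩
  exact (Finset.mem_sdiff.mp (h (Finset.mem_sdiff.mpr ⟨hJ hxJ, hxK⟩))).2
    (Finset.mem_union_left K hxJ)

lemma Finset.card_sdiff_union_lt {α : Type*} [DecidableEq α] {I J K : Finset α}
    (hJ : J ⊆ I) (hK : K ⊆ I) (hne : J ≠ K) (hcard : (I \ J).card ≤ (I \ K).card) :
    (I \ (J ∪ K)).card < (I \ K).card := by
  by_cases hJK : J ⊆ K
  · have hKJ : ¬ K ⊆ J := fun h => hne (Finset.Subset.antisymm hJK h)
    exact (Finset.union_comm J K ▸ card_sdiff_union_lt_of_not_subset hK hKJ).trans_le hcard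
  · exact card_sdiff_union_lt_of_not_subset hJ hJK

/-- For `|I∖J| = i` the subtracted sum in `αⁱ⁺¹` contains `(αⁱ)_J` itself, while every other
summand restricts to some `(αⁱ)_{J ∪ K}` with `|I∖(J ∪ K)| < i`. -/
lemma restrictJ_seqA_eq_zero {n k : ℕ} (I : Finset (Fin n)) (α : Form n k) (i : ℕ)
    {J : Finset (Fin n)} (hJ : J ⊆ I) (hi : (I \ J).card < i) :
    restrictJ J (seqA I α i) = 0 := by
  induction i generalizing J with
  | zero => omega
  | succ i ih =>
    rw [seqA_succ, restrictJ_sub, restrictJ_sum]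
    simp only [restrictJ_restrictJ]
    rw [Finset.sum_eq_single J ?others ?self, Finset.union_self, sub_self]
    case others =>
      intro K hK hne
      rw [Finset.mem_filter, Finset.mem_powerset] at hK
      exact ih (Finset.union_subset hJ hK.1)
        ((Finset.card_sdiff_union_lt hJ hK.1 hne.symm (by omega)).trans_eq hK.2)
    case self =>
      intro hJi
      rw [Finset.union_self]
      exact ih hJ (by simp [hJ] at hJi; omega)

theorem prop9_general {n k : ℕ} (I : Finset (Fin n)) (α : Form n k) :
    α = (∑ i ∈ Finset.range I.card,
          ∑ J ∈ I.powerset.filter (fun J => (I \ J).card = i),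
            restrictJ J (seqA I α i)) + seqA I α I.card ∧
      (∀ i < I.card, ∀ J ∈ I.powerset.filter (fun J => (I \ J).card = i),
        ∀ l ∈ I \ J, restrictJ {l} (restrictJ J (seqA I α i)) = 0) ∧
      (∀ l ∈ I, restrictJ {l} (seqA I α I.card) = 0) := by
  refine ⟨eq_sum_restrictJ_seqA_add_seqA I α I.card, ?_, ?_⟩
  · intro i _ J hJ l hl
    rw [Finset.mem_filter, Finset.mem_powerset] at hJ
    obtain ⟨hlI, hlJ⟩ := Finset.mem_sdiff.mp hl
    rw [restrictJ_restrictJ]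
    refine restrictJ_seqA_eq_zero I α i
      (Finset.union_subset (Finset.singleton_subset_iff.mpr hlI) hJ.1) ?_
    exact hJ.2 ▸ Finset.card_sdiff_union_lt_of_not_subset
      (Finset.singleton_subset_iff.mpr hlI) (by simpa using hlJ)
  · intro l hl
    refine restrictJ_seqA_eq_zero I α I.card (Finset.singleton_subset_iff.mpr hl) ?_
    rw [Finset.sdiff_singleton_eq_erase]
    exact Finset.card_erase_lt_of_mem hl

/-- Proposition 9 of the paper. For `τ = z_r ⋯ z_s` with index set
`I = {r, …, s}` and a holomorphic `k`-form `α` on `ℂⁿ`, the recursive decomposition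
`α = α_I + Σ_{|I∖J|=1} (α¹)_J + ⋯ + Σ_{|I∖J|=s−r} (α^{s−r})_J + α^{s−r+1}` holds
(note `I.card = s − r + 1`), each term `(αⁱ)_J` vanishes on `∪_{l ∈ I∖J} {z_l = 0}`,
and `α^{s−r+1}` vanishes on `{τ = 0}`. -/
theorem prop9 {n k : ℕ} (r s : Fin n) (hrs : r ≤ s) (I : Finset (Fin n))
    (hI : I = Finset.Icc r s) (α : Form n k) (hα : ∀ t, Differentiable ℂ (α t)) :
    α = (∑ i ∈ Finset.range I.card,
          ∑ J ∈ I.powerset.filter (fun J => (I \ J).card = i),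
            restrictJ J (seqA I α i)) + seqA I α I.card ∧
      (∀ i < I.card, ∀ J ∈ I.powerset.filter (fun J => (I \ J).card = i),
        ∀ l ∈ I \ J, restrictJ {l} (restrictJ J (seqA I α i)) = 0) ∧
      (∀ l ∈ I, restrictJ {l} (seqA I α I.card) = 0) :=
  prop9_general I α
end

section
/- Let α be a holomorphic k-form on an open set Ω ⊆ ℂⁿ such that (dz_j/z_j) ∧ α is holomorphic for every j in a set S of indices. Then for every r ≥ 1 and every choice of distinct indices j₁, …, j_r ∈ S, the form (dz_{j₁}/z_{j₁}) ∧ ⋯ ∧ (dz_{j_r}/z_{j_r}) ∧ α extends to a holomorphic (k+r)-form on Ω. -/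
open Complex

/-!
Off `{z_j = 0}` the hypothesis reads `α_u = z_j γ_{u ∪ {j}}`, so by continuity every coefficient
`α_u` with `j ∉ u` vanishes on the hyperplane `{z_j = 0}`. A holomorphic function vanishing on
`{z_j = 0}` is `z_j` times a holomorphic function: near the hyperplane the quotient is the Cauchy
integral `(2πi)⁻¹ ∮ f(z with z_j := w) / (w (w - z_j)) dw`, holomorphic in `z` by differentiation
under the integral sign. The quotient still vanishes on the other hyperplanes, so dividing by the
`z_j`, `j ∈ J`, one at a time gives `α_u = (∏_{j ∈ J} z_j) g_u` with `g_u` holomorphic, and the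
`g_u` are the coefficients of the extension.
-/

open Metric Set Filter MeasureTheory
open scoped Topology Real

section Update

variable {ι : Type*} [DecidableEq ι] {E : ι → Type*}

theorem eventually_update_mem [∀ i, TopologicalSpace (E i)] {x : ∀ i, E i} {U : Set (∀ i, E i)}
    (hU : IsOpen U) (hx : x ∈ U) (j : ι) : ∀ᶠ w in 𝓝 (x j), Function.update x j w ∈ U :=
  ((continuous_const (y := x)).update j continuous_id).continuousAt.preimage_mem_nhds
    (by simpa using hU.mem_nhds hx)

theorem ContinuousAt.eq_of_eventually_update_eq [∀ i, TopologicalSpace (E i)] {Y : Type*}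
    [TopologicalSpace Y] [T2Space Y] {h : (∀ i, E i) → Y} {x : ∀ i, E i} {j : ι} {c : Y}
    [(𝓝[≠] (x j)).NeBot] (hh : ContinuousAt h x)
    (hc : ∀ᶠ w in 𝓝[≠] (x j), h (Function.update x j w) = c) : h x = c := by
  have hupd : Tendsto (Function.update x j) (𝓝[≠] (x j)) (𝓝 x) := by
    simpa using (((continuous_const (y := x)).update j continuous_id).tendsto (x j)).mono_left
      nhdsWithin_le_nhds
  exact tendsto_nhds_unique (hh.tendsto.comp hupd)
    (tendsto_const_nhds.congr' (hc.mono fun _ hw => hw.symm))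

theorem differentiable_update_left {𝕜 : Type*} [NontriviallyNormedField 𝕜] [Fintype ι]
    [∀ i, NormedAddCommGroup (E i)] [∀ i, NormedSpace 𝕜 (E i)] (j : ι) (w : E j) :
    Differentiable 𝕜 (fun x : ∀ i, E i => Function.update x j w) := by
  refine differentiable_pi.2 fun i => ?_
  rcases eq_or_ne i j with rfl | hij
  · simp
  · simpa [Function.update_of_ne hij] using differentiable_apply i

theorem update_mem_closedBall [Fintype ι] [∀ i, PseudoMetricSpace (E i)] {x₀ x : ∀ i, E i}
    {j : ι} {w : E j} {r : ℝ} (hx : x ∈ closedBall x₀ r) (hw : dist w (x₀ j) ≤ r) :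
    Function.update x j w ∈ closedBall x₀ r := by
  refine mem_closedBall.2 ((dist_pi_le_iff (dist_nonneg.trans hw)).2 fun i => ?_)
  rcases eq_or_ne i j with rfl | hij
  · simpa using hw
  · simpa [Function.update_of_ne hij] using (dist_le_pi_dist x x₀ i).trans (mem_closedBall.1 hx)

end Update

section HolomorphicParameter

variable {E V : Type*} [NormedAddCommGroup E] [NormedSpace ℂ E]
  [NormedAddCommGroup V] [NormedSpace ℂ V]

theorem norm_fderiv_le_of_forall_norm_le {g : E → V} {c : E} {ρ M : ℝ} (hρ : 0 < ρ)
    (hg : DifferentiableOn ℂ g (ball c ρ)) (hM : ∀ z ∈ ball c ρ, ‖g z‖ ≤ M) :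
    ‖fderiv ℂ g c‖ ≤ 2 * M / ρ := by
  refine Complex.norm_fderiv_le_div_of_mapsTo_ball hg (fun z hz => ?_) hρ
  rw [mem_closedBall, dist_eq_norm, two_mul]
  exact (norm_sub_le _ _).trans (add_le_add (hM z hz) (hM c (mem_ball_self hρ)))

variable [ProperSpace E] {P : Type*} [PseudoMetricSpace P]

/-- The Cauchy estimate bounds the change of the derivative by the uniform change of the values,
and the latter is small by uniform continuity on a compact set. -/
theorem continuousOn_fderiv_of_continuousOn_uncurry {F : E → P → V} {x₀ : E} {ρ : ℝ} {T : Set P}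
    (hρ : 0 < ρ) (hT : IsCompact T) (hF : ContinuousOn (Function.uncurry F) (closedBall x₀ ρ ×ˢ T))
    (hFd : ∀ t ∈ T, DifferentiableOn ℂ (F · t) (ball x₀ ρ)) :
    ContinuousOn (fun t => fderiv ℂ (F · t) x₀) T := by
  have hunif := Metric.uniformContinuousOn_iff.1
    ((isCompact_closedBall x₀ ρ).prod hT |>.uniformContinuousOn_of_continuous hF)
  refine Metric.continuousOn_iff.2 fun t₀ ht₀ ε hε => ?_
  obtain ⟨δ, hδ, hclose⟩ := hunif (ε * ρ / 4) (by positivity)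
  refine ⟨δ, hδ, fun t ht htt₀ => ?_⟩
  have hx₀ : x₀ ∈ ball x₀ ρ := mem_ball_self hρ
  have hdiff : DifferentiableOn ℂ (fun x => F x t - F x t₀) (ball x₀ ρ) :=
    (hFd t ht).sub (hFd t₀ ht₀)
  have hsmall : ∀ z ∈ ball x₀ ρ, ‖F z t - F z t₀‖ ≤ ε * ρ / 4 := by
    intro z hz
    have hz' : z ∈ closedBall x₀ ρ := ball_subset_closedBall hz
    have hdist := hclose (z, t) ⟨hz', ht⟩ (z, t₀) ⟨hz', ht₀⟩
      (by simpa [Prod.dist_eq] using htt₀)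
    rw [dist_eq_norm] at hdist
    exact hdist.le
  rw [dist_eq_norm, ← fderiv_sub ((hFd t ht).differentiableAt (isOpen_ball.mem_nhds hx₀))
    ((hFd t₀ ht₀).differentiableAt (isOpen_ball.mem_nhds hx₀))]
  calc ‖fderiv ℂ (fun x => F x t - F x t₀) x₀‖ ≤ 2 * (ε * ρ / 4) / ρ :=
        norm_fderiv_le_of_forall_norm_le hρ hdiff hsmall
    _ = ε / 2 := by field_simp; ring
    _ < ε := half_lt_self hε

theorem DifferentiableOn.intervalIntegral_of_continuousOn_uncurry {F : E → ℝ → V} {U : Set E}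
    {a b : ℝ} (hU : IsOpen U) (hF : ContinuousOn (Function.uncurry F) (U ×ˢ uIcc a b))
    (hFd : ∀ t ∈ uIcc a b, DifferentiableOn ℂ (F · t) U) :
    DifferentiableOn ℂ (fun x => ∫ t in a..b, F x t) U := by
  intro x₀ hx₀
  obtain ⟨ρ, hρ, hρU⟩ : ∃ ρ > 0, closedBall x₀ (2 * ρ) ⊆ U := by
    obtain ⟨R, hR, hRU⟩ := Metric.nhds_basis_closedBall.mem_iff.1 (hU.mem_nhds hx₀)
    exact ⟨R / 2, by positivity, by rwa [mul_div_cancel₀ _ two_ne_zero]⟩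
  have hballU : ball x₀ ρ ⊆ U := fun x hx =>
    hρU (mem_closedBall.2 ((mem_ball.1 hx).le.trans (by linarith)))
  obtain ⟨M, hM⟩ := ((isCompact_closedBall x₀ (2 * ρ)).prod isCompact_uIcc)
    |>.exists_bound_of_continuousOn (hF.mono (prod_mono hρU subset_rfl))
  have hFd' : ∀ t ∈ uIcc a b, ∀ x ∈ ball x₀ ρ, HasFDerivAt (F · t) (fderiv ℂ (F · t) x) x :=
    fun t ht x hx => ((hFd t ht).differentiableAt (hU.mem_nhds (hballU hx))).hasFDerivAt
  have hbound : ∀ t ∈ uIcc a b, ∀ x ∈ ball x₀ ρ, ‖fderiv ℂ (F · t) x‖ ≤ 2 * M / ρ := by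
    intro t ht x hx
    have hsub : ball x ρ ⊆ closedBall x₀ (2 * ρ) := fun y hy => mem_closedBall.2 <| by
      linarith [dist_triangle y x x₀, mem_ball.1 hy, mem_ball.1 hx]
    exact norm_fderiv_le_of_forall_norm_le hρ ((hFd t ht).mono (hsub.trans hρU))
      fun y hy => hM (y, t) ⟨hsub hy, ht⟩
  have hcont : ∀ x ∈ U, ContinuousOn (F x) (uIcc a b) := fun x hx =>
    hF.comp (continuousOn_const.prodMk continuousOn_id) fun t ht => ⟨hx, ht⟩
  have hderiv_cont : ContinuousOn (fun t => fderiv ℂ (F · t) x₀) (uIcc a b) :=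
    continuousOn_fderiv_of_continuousOn_uncurry (half_pos hρ) isCompact_uIcc
      (hF.mono (prod_mono (fun x hx => hballU (closedBall_subset_ball (half_lt_self hρ) hx))
        subset_rfl))
      fun t ht => (hFd t ht).mono fun x hx =>
        hballU (ball_subset_ball (half_lt_self hρ).le hx)
  exact (intervalIntegral.hasFDerivAt_integral_of_dominated_of_fderiv_le (μ := volume)
    (ball_mem_nhds x₀ hρ)
    (eventually_of_mem (hU.mem_nhds hx₀) fun x hx =>
      ((hcont x hx).mono uIoc_subset_uIcc).aestronglyMeasurable measurableSet_uIoc)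
    (hcont x₀ hx₀).intervalIntegrable
    ((hderiv_cont.mono uIoc_subset_uIcc).aestronglyMeasurable measurableSet_uIoc)
    (ae_of_all _ fun t ht x hx => hbound t (uIoc_subset_uIcc ht) x hx)
    intervalIntegrable_const
    (ae_of_all _ fun t ht x hx => hFd' t (uIoc_subset_uIcc ht) x hx))
    |>.differentiableAt.differentiableWithinAt

end HolomorphicParameter

theorem two_pi_I_inv_mul_circleIntegral_eq_dslope {φ : ℂ → ℂ} {r : ℝ} {a : ℂ}
    (hφ : DifferentiableOn ℂ φ (closedBall 0 r)) (hφ0 : φ 0 = 0) (ha : a ∈ ball (0 : ℂ) r) :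
    (2 * π * I)⁻¹ * ∮ w in C(0, r), (w * (w - a))⁻¹ * φ w = dslope φ 0 a := by
  have hr : 0 < r := pos_of_mem_ball ha
  have hd : DifferentiableOn ℂ (dslope φ 0) (closedBall 0 r) :=
    (differentiableOn_dslope (closedBall_mem_nhds 0 hr)).2 hφ
  have hkernel : EqOn (fun w => (w * (w - a))⁻¹ * φ w) (fun w => (w - a)⁻¹ • dslope φ 0 w)
      (sphere 0 r) := by
    intro w hw
    have hw0 : w ≠ 0 := ne_zero_of_mem_sphere hr.ne' ⟨w, hw⟩
    simp only [dslope_of_ne _ hw0, slope_def_field, hφ0, smul_eq_mul, mul_inv]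
    ring
  rw [circleIntegral.integral_congr hr.le hkernel, hd.circleIntegral_sub_inv_smul ha, smul_eq_mul,
    ← mul_assoc, inv_mul_cancel₀ two_pi_I_ne_zero, one_mul]

section CoordinateDivision

variable {n : ℕ} {j : Fin n}

theorem norm_apply_lt_of_mem_ball {x₀ x : Pt n} {r : ℝ} (hx₀ : x₀ j = 0) (hx : x ∈ ball x₀ r) :
    ‖x j‖ < r := by
  simpa [hx₀, dist_eq_norm] using (dist_le_pi_dist x x₀ j).trans_lt (mem_ball.1 hx)

/-- Cauchy's formula for `w ↦ f (update x j w) / w` at `w = x j`: this is `f x / x j` when `f`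
vanishes on `{z_j = 0}` near `x`. -/
noncomputable def circleQuotient (f : Pt n → ℂ) (j : Fin n) (r : ℝ) (x : Pt n) : ℂ :=
  (2 * π * I)⁻¹ * ∮ w in C(0, r), (w * (w - x j))⁻¹ * f (Function.update x j w)

theorem eq_mul_circleQuotient {f : Pt n → ℂ} {x₀ x : Pt n} {r : ℝ} (hx₀ : x₀ j = 0)
    (hf : DifferentiableOn ℂ f (closedBall x₀ r))
    (hvan : ∀ y ∈ closedBall x₀ r, y j = 0 → f y = 0) (hx : x ∈ ball x₀ r) :
    f x = x j * circleQuotient f j r x := by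
  have hmaps : MapsTo (Function.update x j) (closedBall 0 r) (closedBall x₀ r) := fun w hw =>
    update_mem_closedBall (ball_subset_closedBall hx) (by simpa [hx₀] using hw)
  have hφ : DifferentiableOn ℂ (fun w => f (Function.update x j w)) (closedBall 0 r) :=
    hf.comp (fun w _ => (hasFDerivAt_update x w).differentiableAt.differentiableWithinAt) hmaps
  have hφ0 : f (Function.update x j 0) = 0 :=
    hvan _ (hmaps (mem_closedBall_self (pos_of_mem_ball hx).le)) (by simp)
  have hxj : x j ∈ ball (0 : ℂ) r := by simpa using norm_apply_lt_of_mem_ball hx₀ hx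
  have hslope := sub_smul_dslope (fun w => f (Function.update x j w)) 0 (x j)
  rw [circleQuotient, two_pi_I_inv_mul_circleIntegral_eq_dslope hφ hφ0 hxj]
  simpa [hφ0] using hslope.symm

theorem differentiableOn_circleQuotient {f : Pt n → ℂ} {x₀ : Pt n} {r : ℝ} (hr : 0 < r)
    (hx₀ : x₀ j = 0) (hf : ∀ y ∈ closedBall x₀ r, DifferentiableAt ℂ f y) :
    DifferentiableOn ℂ (circleQuotient f j r) (ball x₀ (r / 2)) := by
  have hmem : ∀ x ∈ ball x₀ (r / 2), ∀ θ : ℝ,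
      Function.update x j (circleMap 0 r θ) ∈ closedBall x₀ r := fun x hx θ =>
    update_mem_closedBall (ball_subset_closedBall (ball_subset_ball (half_le_self hr.le) hx))
      (by simp [hx₀, abs_of_pos hr])
  have hne : ∀ x ∈ ball x₀ (r / 2), ∀ θ : ℝ,
      circleMap 0 r θ * (circleMap 0 r θ - x j) ≠ 0 := by
    intro x hx θ
    have hxj := norm_apply_lt_of_mem_ball hx₀ hx
    have hw : ‖circleMap 0 r θ‖ = r := by simp [abs_of_pos hr]
    refine mul_ne_zero (by rw [← norm_ne_zero_iff, hw]; exact hr.ne') (sub_ne_zero.2 ?_)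
    rintro hwx
    rw [hwx] at hw
    linarith
  have hfc : ContinuousOn f (closedBall x₀ r) := fun y hy =>
    (hf y hy).continuousAt.continuousWithinAt
  refine DifferentiableOn.const_mul (DifferentiableOn.intervalIntegral_of_continuousOn_uncurry
    isOpen_ball ?_ fun θ _ x hx => ?_) _
  · have hfu : ContinuousOn (fun p : Pt n × ℝ => f (Function.update p.1 j (circleMap 0 r p.2)))
        (ball x₀ (r / 2) ×ˢ uIcc 0 (2 * π)) :=
      hfc.comp (by fun_prop) fun p hp => hmem p.1 hp.1 p.2
    simp only [deriv_circleMap]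
    exact (by fun_prop : Continuous fun p : Pt n × ℝ => circleMap 0 r p.2 * I).continuousOn.smul
      ((ContinuousOn.inv₀ (by fun_prop) fun p hp => hne p.1 hp.1 p.2).mul hfu)
  · have hfu : DifferentiableAt ℂ (fun x => f (Function.update x j (circleMap 0 r θ))) x :=
      (hf _ (hmem x hx θ)).comp x (differentiable_update_left j _ x)
    have hk : DifferentiableAt ℂ (fun x : Pt n => circleMap 0 r θ * (circleMap 0 r θ - x j)) x :=
      by fun_prop
    exact (((hk.inv (hne x hx θ)).mul hfu).const_smul (deriv (circleMap 0 r) θ))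
      |>.differentiableWithinAt

noncomputable def coordQuotient (f : Pt n → ℂ) (j : Fin n) (x : Pt n) : ℂ :=
  if x j = 0 then fderiv ℂ f x (Pi.single j 1) else f x / x j

theorem coordQuotient_eq {f G : Pt n → ℂ} {x : Pt n} (hG : DifferentiableAt ℂ G x)
    (hfG : f =ᶠ[𝓝 x] fun y => y j * G y) : coordQuotient f j x = G x := by
  by_cases hx : x j = 0
  · have hderiv : HasFDerivAt (fun y : Pt n => y j * G y)
        (x j • fderiv ℂ G x + G x • ContinuousLinearMap.proj j) x :=
      (hasFDerivAt_apply j x).mul hG.hasFDerivAt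
    simp [coordQuotient, hx, hfG.fderiv_eq, hderiv.fderiv]
  · simp [coordQuotient, hx, hfG.eq_of_nhds]

theorem eq_mul_coordQuotient {Ω : Set (Pt n)} {f : Pt n → ℂ}
    (hvan : ∀ x ∈ Ω, x j = 0 → f x = 0) : ∀ x ∈ Ω, f x = x j * coordQuotient f j x := by
  intro x hx
  by_cases hxj : x j = 0
  · simp [hxj, hvan x hx hxj]
  · simp [coordQuotient, hxj, mul_div_cancel₀]

theorem exists_local_coord_quotient {Ω : Set (Pt n)} (hΩ : IsOpen Ω) {f : Pt n → ℂ}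
    (hf : DifferentiableOn ℂ f Ω) (hvan : ∀ x ∈ Ω, x j = 0 → f x = 0) {x₀ : Pt n} (hx₀ : x₀ ∈ Ω) :
    ∃ V, IsOpen V ∧ x₀ ∈ V ∧ ∃ G : Pt n → ℂ, DifferentiableOn ℂ G V ∧
      EqOn f (fun y => y j * G y) V := by
  by_cases hx₀j : x₀ j = 0
  · obtain ⟨r, hr, hrΩ⟩ := Metric.nhds_basis_closedBall.mem_iff.1 (hΩ.mem_nhds hx₀)
    refine ⟨ball x₀ (r / 2), isOpen_ball, mem_ball_self (half_pos hr), circleQuotient f j r,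
      differentiableOn_circleQuotient hr hx₀j fun y hy => hf.differentiableAt
        (hΩ.mem_nhds (hrΩ hy)), fun x hx => ?_⟩
    exact eq_mul_circleQuotient hx₀j (hf.mono hrΩ) (fun y hy => hvan y (hrΩ hy))
      (ball_subset_ball (half_le_self hr.le) hx)
  · refine ⟨Ω ∩ {y | y j ≠ 0}, hΩ.inter (isOpen_ne_fun (continuous_apply j) continuous_const),
      ⟨hx₀, hx₀j⟩, fun y => (y j)⁻¹ * f y, ?_, fun y hy => (mul_inv_cancel_left₀ hy.2 _).symm⟩
    exact ((differentiableOn_apply j _).inv fun y hy => hy.2).mul (hf.mono inter_subset_left)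

theorem differentiableOn_coordQuotient {Ω : Set (Pt n)} (hΩ : IsOpen Ω) {f : Pt n → ℂ}
    (hf : DifferentiableOn ℂ f Ω) (hvan : ∀ x ∈ Ω, x j = 0 → f x = 0) :
    DifferentiableOn ℂ (coordQuotient f j) Ω := by
  intro x₀ hx₀
  obtain ⟨V, hV, hx₀V, G, hG, hfG⟩ := exists_local_coord_quotient hΩ hf hvan hx₀
  have hGx : ∀ y ∈ V, DifferentiableAt ℂ G y := fun y hy => hG.differentiableAt (hV.mem_nhds hy)
  have hquot : coordQuotient f j =ᶠ[𝓝 x₀] G := eventually_of_mem (hV.mem_nhds hx₀V)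
    fun y hy => coordQuotient_eq (hGx y hy) (eventually_of_mem (hV.mem_nhds hy) hfG)
  exact ((hGx x₀ hx₀V).congr_of_eventuallyEq hquot).differentiableWithinAt

theorem eq_coord_mul_of_forall_ne_zero {Ω : Set (Pt n)} (hΩ : IsOpen Ω) {f g : Pt n → ℂ}
    (hf : ContinuousOn f Ω) (hg : ContinuousOn g Ω)
    (hfg : ∀ x ∈ Ω, x j ≠ 0 → f x = x j * g x) : ∀ x ∈ Ω, f x = x j * g x := by
  intro x hx
  by_cases hxj : x j = 0
  · refine sub_eq_zero.1 (ContinuousAt.eq_of_eventually_update_eq (j := j)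
      ((hf.sub ((continuousOn_apply j _).mul hg)).continuousAt (hΩ.mem_nhds hx)) ?_)
    filter_upwards [nhdsWithin_le_nhds (eventually_update_mem hΩ hx j), self_mem_nhdsWithin]
      with w hwΩ hw
    simp only [Pi.sub_apply, Pi.mul_apply, Function.update_self]
    rw [hfg _ hwΩ (by simpa [hxj] using hw), Function.update_self, sub_self]
  · exact hfg x hx hxj

theorem eq_zero_of_eq_coord_mul {Ω : Set (Pt n)} (hΩ : IsOpen Ω) {f h : Pt n → ℂ} {i : Fin n}
    (hij : i ≠ j) (hh : ContinuousOn h Ω) (hfh : ∀ x ∈ Ω, f x = x j * h x)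
    (hvan : ∀ x ∈ Ω, x i = 0 → f x = 0) : ∀ x ∈ Ω, x i = 0 → h x = 0 := by
  intro x hx hxi
  by_cases hxj : x j = 0
  · refine ContinuousAt.eq_of_eventually_update_eq (j := j) (hh.continuousAt (hΩ.mem_nhds hx)) ?_
    filter_upwards [nhdsWithin_le_nhds (eventually_update_mem hΩ hx j), self_mem_nhdsWithin]
      with w hwΩ hw
    have hfw := hfh _ hwΩ
    rw [hvan _ hwΩ (by simpa [Function.update_of_ne hij] using hxi), Function.update_self]
      at hfw
    exact (mul_eq_zero.1 hfw.symm).resolve_left (by simpa [hxj] using hw)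
  · have hfx := hfh x hx
    rw [hvan x hx hxi] at hfx
    exact (mul_eq_zero.1 hfx.symm).resolve_left hxj

theorem exists_eq_prod_mul {Ω : Set (Pt n)} (hΩ : IsOpen Ω) (J : Finset (Fin n)) {f : Pt n → ℂ}
    (hf : DifferentiableOn ℂ f Ω) (hvan : ∀ j ∈ J, ∀ x ∈ Ω, x j = 0 → f x = 0) :
    ∃ g : Pt n → ℂ, DifferentiableOn ℂ g Ω ∧ ∀ x ∈ Ω, f x = (∏ j ∈ J, x j) * g x := by
  induction J using Finset.induction_on generalizing f with
  | empty => exact ⟨f, hf, by simp⟩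
  | @insert j J hj ih =>
    have hvanj := hvan j (Finset.mem_insert_self j J)
    have hquot := differentiableOn_coordQuotient hΩ hf hvanj
    have hfq := eq_mul_coordQuotient hvanj
    obtain ⟨g, hg, hqg⟩ := ih hquot fun i hi => eq_zero_of_eq_coord_mul hΩ
      (ne_of_mem_of_not_mem hi hj) hquot.continuousOn hfq (hvan i (Finset.mem_insert_of_mem hi))
    refine ⟨g, hg, fun x hx => ?_⟩
    rw [hfq x hx, hqg x hx, Finset.prod_insert hj, mul_assoc]

end CoordinateDivision

section LogarithmicForms

variable {n k : ℕ} {Ω : Set (Pt n)} {α : Form n k}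

theorem logWedge_singleton_apply_insert (α : Form n k) {j : Fin n} (u : Idx n k) (hju : j ∉ u.1)
    (z : Pt n) :
    logWedge {j} (Finset.card_singleton j) α
        ⟨insert j u.1, by rw [Finset.card_insert_of_notMem hju, u.2]⟩ z = (z j)⁻¹ * α u z := by
  have hsub : ({j} : Finset (Fin n)) ⊆ insert j u.1 := by simp
  simp only [logWedge, dif_pos hsub, Finset.prod_singleton]
  congr 3
  rw [Finset.sdiff_singleton_eq_erase, Finset.erase_insert hju]

theorem eq_zero_of_extendsHolo_logWedge_singleton (hΩ : IsOpen Ω) (hα : HoloOn Ω α) {j : Fin n}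
    (hext : ExtendsHolo Ω (logWedge {j} (Finset.card_singleton j) α) {z | z j = 0})
    (u : Idx n k) (hju : j ∉ u.1) : ∀ z ∈ Ω, z j = 0 → α u z = 0 := by
  obtain ⟨γ, hγ, hγα⟩ := hext
  set s : Idx n (k + 1) := ⟨insert j u.1, by rw [Finset.card_insert_of_notMem hju, u.2]⟩
  have hαγ := eq_coord_mul_of_forall_ne_zero hΩ (hα u).continuousOn (hγ s).continuousOn
    fun x hx hxj => by
      rw [hγα s x ⟨hx, hxj⟩, logWedge_singleton_apply_insert α u hju, mul_inv_cancel_left₀ hxj]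
  intro z hz hzj
  rw [hαγ z hz, hzj, zero_mul]

theorem extendsHolo_logWedge_of_forall_eq_prod_mul {r : ℕ} {J : Finset (Fin n)} (hJ : J.card = r)
    (hdiv : ∀ u : Idx n k, Disjoint u.1 J →
      ∃ g : Pt n → ℂ, DifferentiableOn ℂ g Ω ∧ ∀ z ∈ Ω, α u z = (∏ j ∈ J, z j) * g z) :
    ExtendsHolo Ω (logWedge J hJ α) {z | ∃ j ∈ J, z j = 0} := by
  choose g hg hαg using hdiv
  refine ⟨fun t z => if ht : J ⊆ t.1 then
      g ⟨t.1 \ J, by rw [Finset.card_sdiff_of_subset ht, t.2, hJ]; omega⟩ Finset.sdiff_disjoint z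
    else 0, fun t => ?_, fun t z ⟨hz, hzJ⟩ => ?_⟩
  · by_cases ht : J ⊆ t.1
    · simpa only [dif_pos ht] using hg _ _
    · simpa only [dif_neg ht] using differentiableOn_const 0
  · have hprod : (∏ j ∈ J, z j) ≠ 0 := Finset.prod_ne_zero_iff.2 fun j hj hzj => hzJ ⟨j, hj, hzj⟩
    by_cases ht : J ⊆ t.1
    · simp only [logWedge, dif_pos ht, Finset.prod_inv_distrib]
      rw [hαg _ _ z hz, inv_mul_cancel_left₀ hprod]
    · simp only [logWedge, dif_neg ht]

end LogarithmicForms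

/-- If `(dz_j/z_j) ∧ α` extends holomorphically on `Ω` for every `j` in a
set `S` of indices, then for every `r ≥ 1` and every choice of `r` distinct indices in `S`
(i.e. every `J ⊆ S` with `J.card = r`) the iterated wedge
`(dz_{j₁}/z_{j₁}) ∧ ⋯ ∧ (dz_{j_r}/z_{j_r}) ∧ α` extends to a holomorphic `(k+r)`-form on `Ω`. -/
theorem stmt6 {n k : ℕ} (Ω : Set (Pt n)) (hΩ : IsOpen Ω) (S : Finset (Fin n))
    (α : Form n k) (hα : HoloOn Ω α)
    (h : ∀ j ∈ S,
      ExtendsHolo Ω (logWedge {j} (Finset.card_singleton j) α) {z | z j = 0}) :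
    ∀ (r : ℕ), 1 ≤ r → ∀ (J : Finset (Fin n)), J ⊆ S → ∀ hJ : J.card = r,
      ExtendsHolo Ω (logWedge J hJ α) {z | ∃ j ∈ J, z j = 0} := by
  intro r _ J hJS hJ
  refine extendsHolo_logWedge_of_forall_eq_prod_mul hJ fun u hu => ?_
  exact exists_eq_prod_mul hΩ J (hα u) fun j hj =>
    eq_zero_of_extendsHolo_logWedge_singleton hΩ hα (h j (hJS hj)) u
      (Finset.disjoint_right.1 hu hj)
end
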